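/- Let w ∈ S_n with w ≠ w_0, r its first ascent, and suppose (i,j), (i',j) ∈ D(w·s_r) with i < i' are two squares in the same column of a set-valued Rothe tableau T flagged by (1,...,n) such that r ∈ T(i,j) and r+1 ∈ T(i',j). If for all t with i < t < i' one has (w·s_r)_t < j, then m_{ij}(w·s_r) = m_{i'j}(w·s_r) + i' − i − 1. -/

import Mathlib

open Finset

/-- The Rothe diagram of `w` (0-based): squares `(i,j)` with `w i > j` and `w⁻¹ j > i`. -/
def RD {n : ℕ} (w : Equiv.Perm (Fin n)) : Finset (Fin n × Fin n) :=
  Finset.univ.filter (fun p => p.2 < w p.1 ∧ p.1 < w⁻¹ p.2)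

/-- `m_{ij}(w)`: the number of squares of `D(w)` in row `i` weakly left of column `j`. -/
def mStat {n : ℕ} (w : Equiv.Perm (Fin n)) (i j : Fin n) : ℕ :=
  ((RD w).filter (fun p => p.1 = i ∧ p.2 ≤ j)).card

/-- A set-valued Rothe tableau of shape `D(w)` flagged by `(1,2,…,n)`:
each square of `D(w)` carries a finite nonempty set of positive integers,
rows are weakly decreasing (for `j < j'` in a row, `max T(i,j') ≤ min T(i,j)`),
columns are strictly increasing, and every entry in (0-based) row `i` is `≤ i+1`. -/
def IsSVRT {n : ℕ} (w : Equiv.Perm (Fin n)) (T : Fin n × Fin n → Finset ℕ) : Prop :=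
  (∀ p ∈ RD w, (T p).Nonempty) ∧
  (∀ i j j' : Fin n, j < j' → (i, j) ∈ RD w → (i, j') ∈ RD w →
      ∀ a ∈ T (i, j'), ∀ b ∈ T (i, j), a ≤ b) ∧
  (∀ i i' j : Fin n, i < i' → (i, j) ∈ RD w → (i', j) ∈ RD w →
      ∀ a ∈ T (i, j), ∀ b ∈ T (i', j), a < b) ∧
  (∀ p ∈ RD w, ∀ a ∈ T p, 1 ≤ a ∧ a ≤ (p.1 : ℕ) + 1)

/-- Let `w ≠ w₀` with first ascent at 0-based position `a` (1-based `r = a+1`)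
and `w' = w·s_r`.  Suppose `(i,j), (i',j) ∈ D(w·s_r)` with `i < i'` are squares
of a flagged set-valued Rothe tableau `T` of shape `D(w·s_r)` with
`r ∈ T(i,j)` and `r+1 ∈ T(i',j)` (1-based values `a+1`, `a+2`).  If
`(w·s_r)_t < j` for all `i < t < i'`, then
`m_{ij}(w·s_r) = m_{i'j}(w·s_r) + i' − i − 1`. -/
theorem stmt10 {n : ℕ} (w : Equiv.Perm (Fin n))
    (hw0 : w ≠ Fin.revPerm)
    (a : ℕ) (ha : a + 1 < n)
    (hasc : w ⟨a, by omega⟩ < w ⟨a + 1, ha⟩)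
    (hmin : ∀ s : ℕ, ∀ hs : s < a, w ⟨s + 1, by omega⟩ < w ⟨s, by omega⟩)
    (w' : Equiv.Perm (Fin n))
    (hw' : w' = w * Equiv.swap (⟨a, by omega⟩ : Fin n) ⟨a + 1, ha⟩)
    (T : Fin n × Fin n → Finset ℕ) (hT : IsSVRT w' T)
    (i i' j : Fin n) (hii' : i < i')
    (hij : (i, j) ∈ RD w') (hi'j : (i', j) ∈ RD w')
    (hr : a + 1 ∈ T (i, j)) (hr1 : a + 2 ∈ T (i', j))
    (hbetween : ∀ t : Fin n, i < t → t < i' → w' t < j) :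
    mStat w' i j = mStat w' i' j + ((i' : ℕ) - (i : ℕ) - 1) := by
  have hji : j < w' i := by
    simp only [RD, Finset.mem_filter] at hij; exact hij.2.1
  have hji' : j < w' i' := by
    simp only [RD, Finset.mem_filter] at hi'j; exact hi'j.2.1
  have key : ∀ x : Fin n, j < w' x →
      mStat w' x j = (univ.filter (fun t => x < t ∧ w' t ≤ j)).card := by
    intro x hx
    unfold mStat RD
    apply Finset.card_bij (fun p _ => w'⁻¹ p.2)
    · intro p hp
      simp only [Finset.mem_filter, Finset.mem_univ, true_and] at hp ⊢
      obtain ⟨⟨h1, h2⟩, h3, h4⟩ := hp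
      refine ⟨h3 ▸ h2, ?_⟩
      rw [show w' (w'⁻¹ p.2) = p.2 from w'.apply_symm_apply p.2]
      exact h4
    · intro p hp q hq hpq
      simp only [Finset.mem_filter, Finset.mem_univ, true_and] at hp hq
      have h2 : p.2 = q.2 := by
        have := congrArg w' hpq
        simpa using this
      have h1 : p.1 = q.1 := hp.2.1.trans hq.2.1.symm
      exact Prod.ext h1 h2
    · intro t ht
      simp only [Finset.mem_filter, Finset.mem_univ, true_and] at ht
      refine ⟨(x, w' t), ?_, by simp⟩
      simp only [Finset.mem_filter, Finset.mem_univ, true_and]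
      exact ⟨⟨lt_of_le_of_lt ht.2 hx, by simpa using ht.1⟩, ht.2⟩
  rw [key i hji, key i' hji']
  have hsplit : univ.filter (fun t => i < t ∧ w' t ≤ j)
      = (univ.filter (fun t => i' < t ∧ w' t ≤ j)) ∪ Finset.Ioo i i' := by
    ext t
    simp only [Finset.mem_union, Finset.mem_filter, Finset.mem_univ, true_and,
      Finset.mem_Ioo]
    constructor
    · rintro ⟨h1, h2⟩
      rcases lt_trichotomy t i' with h | h | h
      · exact Or.inr ⟨h1, h⟩
      · subst h; exact absurd hji' (not_lt.2 h2)
      · exact Or.inl ⟨h, h2⟩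
    · rintro (⟨h1, h2⟩ | ⟨h1, h2⟩)
      · exact ⟨hii'.trans h1, h2⟩
      · exact ⟨h1, le_of_lt (hbetween t h1 h2)⟩
  have hdisj : Disjoint (univ.filter (fun t => i' < t ∧ w' t ≤ j)) (Finset.Ioo i i') := by
    rw [Finset.disjoint_left]
    intro t ht ht'
    simp only [Finset.mem_filter, Finset.mem_univ, true_and] at ht
    simp only [Finset.mem_Ioo] at ht'
    exact absurd (ht.1.trans ht'.2) (lt_irrefl _)
  rw [hsplit, Finset.card_union_of_disjoint hdisj, Fin.card_Ioo]
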